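/- Let X be a locally compact Hausdorff topological space. Suppose that for each f ∈ C_c(X) we are given an ℝ-linear functional ρ_f : C(f) → ℝ which is positive (ρ_f(h) ≥ 0 whenever h ∈ C(f) and h ≥ 0) and has norm at most 1 (|ρ_f(h)| ≤ ‖h‖ for all h ∈ C(f)), and suppose this family is coherent: whenever f, g ∈ C_c(X) with g ∈ C(f), the restriction of ρ_f to C(g) equals ρ_g. Then the functional η : C_c(X) → ℝ defined by η(f) = ρ_f(f) is a 1-Lipschitz quasi-integral on X satisfying η|_{C(f)} = ρ_f for every f ∈ C_c(X), and η is the unique quasi-integral with this property. -/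
import Mathlib


/-- `f : X → ℝ` is a compactly supported continuous function. -/
def IsCc {X : Type*} [TopologicalSpace X] (f : X → ℝ) : Prop :=
  Continuous f ∧ HasCompactSupport f

/-- The uniform norm of a function `f : X → ℝ`. -/
noncomputable def unif {X : Type*} (f : X → ℝ) : ℝ := ⨆ x, |f x|

/-- `C(f) = {φ ∘ f | φ : ℝ → ℝ continuous, φ 0 = 0}`. -/
def Cf {X : Type*} (f : X → ℝ) : Set (X → ℝ) :=
  {g | ∃ φ : ℝ → ℝ, Continuous φ ∧ φ 0 = 0 ∧ g = φ ∘ f}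

/-- A quasi-integral on `X`: a functional on `C_c(X)` which is positive and whose
restriction to `C(f)` is `ℝ`-linear for every `f ∈ C_c(X)`. -/
def IsQuasiIntegral {X : Type*} [TopologicalSpace X] (η : (X → ℝ) → ℝ) : Prop :=
  (∀ f : X → ℝ, IsCc f → (∀ x, 0 ≤ f x) → 0 ≤ η f) ∧
  (∀ f : X → ℝ, IsCc f →
    (∀ g ∈ Cf f, ∀ h ∈ Cf f, η (g + h) = η g + η h) ∧
    (∀ (c : ℝ), ∀ g ∈ Cf f, η (c • g) = c * η g))


section Aux
variable {X : Type*} [TopologicalSpace X]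

lemma self_mem_Cf (f : X → ℝ) : f ∈ Cf f := ⟨id, continuous_id, rfl, rfl⟩

lemma comp_mem_Cf {φ : ℝ → ℝ} (f : X → ℝ) (hφ : Continuous φ) (h0 : φ 0 = 0) :
    (fun x => φ (f x)) ∈ Cf f := ⟨φ, hφ, h0, rfl⟩

lemma isCc_comp {f : X → ℝ} (hf : IsCc f) {φ : ℝ → ℝ} (hφ : Continuous φ) (h0 : φ 0 = 0) :
    IsCc (fun x => φ (f x)) := ⟨hφ.comp hf.1, hf.2.comp_left h0⟩

lemma isCc_of_mem {f g : X → ℝ} (hf : IsCc f) (hg : g ∈ Cf f) : IsCc g := by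
  obtain ⟨φ, h1, h2, rfl⟩ := hg
  exact isCc_comp hf h1 h2

lemma cc_bound {f : X → ℝ} (hf : IsCc f) : ∃ B, 0 ≤ B ∧ ∀ x, |f x| ≤ B := by
  obtain ⟨C, hC⟩ := hf.1.bounded_above_of_compact_support hf.2
  exact ⟨max C 0, le_max_right _ _, fun x => le_trans (by simpa using hC x) (le_max_left _ _)⟩

lemma unif_nonneg (f : X → ℝ) : 0 ≤ unif f := Real.iSup_nonneg fun x => abs_nonneg _

lemma unif_le {f : X → ℝ} {c : ℝ} (hc : 0 ≤ c) (h : ∀ x, |f x| ≤ c) : unif f ≤ c :=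
  Real.iSup_le h hc

lemma abs_le_unif {f : X → ℝ} (hf : IsCc f) (x : X) : |f x| ≤ unif f := by
  obtain ⟨B, _, hB⟩ := cc_bound hf
  exact le_ciSup ⟨B, by rintro _ ⟨y, rfl⟩; exact hB y⟩ x

end Aux
set_option linter.unusedSectionVars false
set_option linter.unusedVariables false
set_option maxHeartbeats 1000000

section Core
variable {X : Type*} [TopologicalSpace X] [LocallyCompactSpace X] [T2Space X]
variable (ρ : (X → ℝ) → (X → ℝ) → ℝ)
variable (hadd : ∀ f : X → ℝ, IsCc f → ∀ g ∈ Cf f, ∀ h ∈ Cf f, ρ f (g + h) = ρ f g + ρ f h)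
variable (hsmul : ∀ f : X → ℝ, IsCc f → ∀ (c : ℝ), ∀ g ∈ Cf f, ρ f (c • g) = c * ρ f g)
variable (hpos : ∀ f : X → ℝ, IsCc f → ∀ h ∈ Cf f, (∀ x, 0 ≤ h x) → 0 ≤ ρ f h)
variable (hnorm : ∀ f : X → ℝ, IsCc f → ∀ h ∈ Cf f, |ρ f h| ≤ unif h)
variable (hcoh : ∀ f : X → ℝ, IsCc f → ∀ g ∈ Cf f, ∀ h ∈ Cf g, ρ f h = ρ g h)

include hadd hsmul hpos hnorm hcoh

/-- Coherence specialization: `ρ f h = ρ h h` for `h ∈ C(f)`. -/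
lemma rho_self {f : X → ℝ} (hf : IsCc f) {h : X → ℝ} (hh : h ∈ Cf f) :
    ρ f h = ρ h h :=
  hcoh f hf h hh h (self_mem_Cf h)

/-- Plateau comparison lemma: if `0 ≤ u ≤ c`, `0 ≤ v ≤ c` and `v = c` wherever `u > 0`,
then `ρ u u ≤ ρ v v`. -/
lemma lemA {u v : X → ℝ} (hu : IsCc u) (hv : IsCc v) {c : ℝ} (hc : 0 < c)
    (hu0 : ∀ x, 0 ≤ u x) (huc : ∀ x, u x ≤ c)
    (hv0 : ∀ x, 0 ≤ v x) (hvc : ∀ x, v x ≤ c)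
    (hp : ∀ x, 0 < u x → v x = c) : ρ u u ≤ ρ v v := by
  set w : X → ℝ := fun x => u x + v x with hw_def
  have hw : IsCc w := ⟨hu.1.add hv.1, hu.2.add hv.2⟩
  have key : ∀ x, (0 < u x ∧ v x = c ∧ w x = u x + c) ∨ (u x = 0 ∧ w x = v x) := by
    intro x
    rcases (hu0 x).lt_or_eq with h | h
    · exact Or.inl ⟨h, hp x h, by simp [hw_def, hp x h]⟩
    · exact Or.inr ⟨h.symm, by simp [hw_def, ← h]⟩
  have humem : u ∈ Cf w := by
    refine ⟨fun t => max (t - c) 0, by fun_prop, ?_, funext fun x => ?_⟩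
    · show max (0 - c) 0 = 0
      rw [max_eq_right (by linarith)]
    rcases key x with ⟨h1, h2, h3⟩ | ⟨h1, h2⟩
    · show u x = max (w x - c) 0
      rw [h3, max_eq_left (by linarith)]; ring
    · show u x = max (w x - c) 0
      rw [h2, h1, max_eq_right (by have := hvc x; linarith)]
  have hvmem : v ∈ Cf w := by
    refine ⟨fun t => min t c, by fun_prop, ?_, funext fun x => ?_⟩
    · show min 0 c = 0
      rw [min_eq_left hc.le]
    rcases key x with ⟨h1, h2, h3⟩ | ⟨h1, h2⟩
    · show v x = min (w x) c
      rw [h3, h2, min_eq_right (by linarith)]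
    · show v x = min (w x) c
      rw [h2, min_eq_left (hvc x)]
  have hdmem : (fun x => v x - u x) ∈ Cf w := by
    obtain ⟨φ1, hφ1, hφ10, he1⟩ := hvmem
    obtain ⟨φ2, hφ2, hφ20, he2⟩ := humem
    refine ⟨fun t => φ1 t - φ2 t, by fun_prop, by simp [hφ10, hφ20], funext fun x => ?_⟩
    simp [congrFun he1 x, congrFun he2 x]
  have hsum : ρ w (u + (fun x => v x - u x)) = ρ w u + ρ w (fun x => v x - u x) :=
    hadd w hw u humem _ hdmem
  have huv : u + (fun x => v x - u x) = v := by funext x; simp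
  have hd0 : 0 ≤ ρ w (fun x => v x - u x) := by
    refine hpos w hw _ hdmem fun x => ?_
    rcases key x with ⟨h1, h2, _⟩ | ⟨h1, _⟩
    · have := huc x; linarith
    · have := hv0 x; linarith
  have h1 : ρ w u ≤ ρ w v := by rw [huv] at hsum; linarith
  rwa [rho_self ρ hadd hsmul hpos hnorm hcoh hw humem,
    rho_self ρ hadd hsmul hpos hnorm hcoh hw hvmem] at h1

/-- Disjoint-support additivity bound: if `0 ≤ u, v ≤ c` have disjoint (closed) supports,
then `ρ u u + ρ v v ≤ c`. -/
lemma lemB {u v : X → ℝ} (hu : IsCc u) (hv : IsCc v) {c : ℝ} (hc : 0 < c)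
    (hu0 : ∀ x, 0 ≤ u x) (huc : ∀ x, u x ≤ c)
    (hv0 : ∀ x, 0 ≤ v x) (hvc : ∀ x, v x ≤ c)
    (hdisj : Disjoint (tsupport u) (tsupport v)) : ρ u u + ρ v v ≤ c := by
  obtain ⟨q, hq1, hq0, hqc, hq01⟩ :=
    exists_continuous_one_zero_of_isCompact hu.2 (isClosed_tsupport v) hdisj
  set w : X → ℝ := fun x => u x - v x + 2 * c * q x with hw_def
  have hw : IsCc w := by
    constructor
    · exact (hu.1.sub hv.1).add (continuous_const.mul q.continuous)
    · have hneg : HasCompactSupport ((fun t : ℝ => -t) ∘ v) := hv.2.comp_left neg_zero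
      have h2 : HasCompactSupport fun x => u x - v x := by
        have he : (fun x => u x - v x) = u + ((fun t : ℝ => -t) ∘ v) := by
          funext x; simp [sub_eq_add_neg]
        rw [he]; exact hu.2.add hneg
      exact h2.add hqc.mul_left
  have key : ∀ x, (0 < u x ∧ v x = 0 ∧ w x = u x + 2 * c)
      ∨ (0 < v x ∧ u x = 0 ∧ w x = -v x)
      ∨ (u x = 0 ∧ v x = 0 ∧ 0 ≤ w x ∧ w x ≤ 2 * c) := by
    intro x
    rcases (hu0 x).lt_or_eq with h | h
    · have hxs : x ∈ tsupport u := subset_tsupport u (by simp [h.ne'])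
      have hv0' : v x = 0 := by
        by_contra hvx
        exact (Set.disjoint_left.mp hdisj hxs) (subset_tsupport v hvx)
      have hq : q x = 1 := hq1 hxs
      refine Or.inl ⟨h, hv0', ?_⟩
      show u x - v x + 2 * c * q x = u x + 2 * c
      rw [hv0', hq]; ring
    · rcases (hv0 x).lt_or_eq with h' | h'
      · have hxs : x ∈ tsupport v := subset_tsupport v (by simp [h'.ne'])
        have hq : q x = 0 := hq0 hxs
        refine Or.inr (Or.inl ⟨h', h.symm, ?_⟩)
        show u x - v x + 2 * c * q x = -v x
        rw [← h, hq]; ring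
      · refine Or.inr (Or.inr ⟨h.symm, h'.symm, ?_, ?_⟩)
        · show 0 ≤ u x - v x + 2 * c * q x
          rw [← h, ← h']
          have := (hq01 x).1; nlinarith
        · show u x - v x + 2 * c * q x ≤ 2 * c
          rw [← h, ← h']
          have := (hq01 x).2; nlinarith
  have humem : u ∈ Cf w := by
    refine ⟨fun t => max (t - 2 * c) 0, by fun_prop, ?_, funext fun x => ?_⟩
    · show max (0 - 2 * c) 0 = 0
      rw [max_eq_right (by linarith)]
    show u x = max (w x - 2 * c) 0
    rcases key x with ⟨h1, h2, h3⟩ | ⟨h1, h2, h3⟩ | ⟨h1, h2, h3, h4⟩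
    · rw [h3, max_eq_left (by linarith)]; ring
    · rw [h3, h2, max_eq_right (by have := hv0 x; linarith)]
    · rw [h1, max_eq_right (by linarith)]
  have hvmem : v ∈ Cf w := by
    refine ⟨fun t => max (-t) 0, by fun_prop, by norm_num, funext fun x => ?_⟩
    show v x = max (-w x) 0
    rcases key x with ⟨h1, h2, h3⟩ | ⟨h1, h2, h3⟩ | ⟨h1, h2, h3, h4⟩
    · rw [h3, h2, max_eq_right (by linarith)]
    · rw [h3, neg_neg, max_eq_left (by linarith)]
    · rw [h2, max_eq_right (by linarith)]
  have hsum : ρ w (u + v) = ρ w u + ρ w v := hadd w hw u humem v hvmem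
  have hb : |ρ w (u + v)| ≤ unif (u + v) := by
    have huvmem : (u + v) ∈ Cf w := by
      obtain ⟨φ1, hφ1, hφ10, he1⟩ := humem
      obtain ⟨φ2, hφ2, hφ20, he2⟩ := hvmem
      refine ⟨fun t => φ1 t + φ2 t, by fun_prop, by simp [hφ10, hφ20], funext fun x => ?_⟩
      simp [congrFun he1 x, congrFun he2 x]
    exact hnorm w hw (u + v) huvmem
  have hub : unif (u + v) ≤ c := by
    refine unif_le hc.le fun x => ?_
    rcases key x with ⟨h1, h2, h3⟩ | ⟨h1, h2, h3⟩ | ⟨h1, h2, h3, h4⟩ <;>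
      simp only [Pi.add_apply]
    · rw [h2, add_zero, abs_of_nonneg (hu0 x)]; exact huc x
    · rw [h2, zero_add, abs_of_nonneg (hv0 x)]; exact hvc x
    · rw [h1, h2, add_zero, abs_zero]; exact hc.le
  have hfin := abs_le.mp (hb.trans hub)
  rw [hsum, rho_self ρ hadd hsmul hpos hnorm hcoh hw humem,
    rho_self ρ hadd hsmul hpos hnorm hcoh hw hvmem] at hfin
  exact hfin.2

end Core
section Layer
variable {X : Type*} [TopologicalSpace X] [LocallyCompactSpace X] [T2Space X]
variable (ρ : (X → ℝ) → (X → ℝ) → ℝ)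
variable (hadd : ∀ f : X → ℝ, IsCc f → ∀ g ∈ Cf f, ∀ h ∈ Cf f, ρ f (g + h) = ρ f g + ρ f h)
variable (hsmul : ∀ f : X → ℝ, IsCc f → ∀ (c : ℝ), ∀ g ∈ Cf f, ρ f (c • g) = c * ρ f g)
variable (hpos : ∀ f : X → ℝ, IsCc f → ∀ h ∈ Cf f, (∀ x, 0 ≤ h x) → 0 ≤ ρ f h)
variable (hnorm : ∀ f : X → ℝ, IsCc f → ∀ h ∈ Cf f, |ρ f h| ≤ unif h)
variable (hcoh : ∀ f : X → ℝ, IsCc f → ∀ g ∈ Cf f, ∀ h ∈ Cf g, ρ f h = ρ g h)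

/-- Pointwise layer-cake identity. -/
lemma layer_sum {δ : ℝ} (hδ : 0 < δ) (L : ℕ) {s : ℝ} (hs : 0 ≤ s) :
    ∑ k ∈ Finset.range L, min δ (max (s - k * δ) 0) = min s (L * δ) := by
  induction L with
  | zero => simp [min_eq_right hs]
  | succ n ih =>
    rw [Finset.sum_range_succ, ih]
    push_cast
    rcases le_total s (n * δ) with h | h
    · rw [min_eq_left h, max_eq_right (by linarith), min_eq_right hδ.le,
        min_eq_left (by linarith)]
      ring
    · rw [min_eq_right h, max_eq_left (by linarith)]
      rcases le_total s (n * δ + δ) with h' | h'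
      · rw [min_eq_right (by linarith), min_eq_left (by linarith)]; ring
      · rw [min_eq_left (by linarith), min_eq_right (by linarith)]; ring

include hadd hsmul

/-- Finite additivity of `ρ f` over `C(f)`. -/
lemma rho_sum {f : X → ℝ} (hf : IsCc f) (φ : ℕ → ℝ → ℝ)
    (hφc : ∀ k, Continuous (φ k)) (hφ0 : ∀ k, φ k 0 = 0) (L : ℕ) :
    ρ f (fun x => ∑ k ∈ Finset.range L, φ k (f x))
      = ∑ k ∈ Finset.range L, ρ f (fun x => φ k (f x)) := by
  induction L with
  | zero =>
    have h0 : ρ f ((0 : ℝ) • f) = 0 * ρ f f := hsmul f hf 0 f (self_mem_Cf f)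
    have he : ((0 : ℝ) • f) = (fun _ : X => (0 : ℝ)) := by funext x; simp
    rw [he] at h0
    simpa using h0
  | succ n ih =>
    have he : (fun x => ∑ k ∈ Finset.range (n + 1), φ k (f x))
        = (fun x => ∑ k ∈ Finset.range n, φ k (f x)) + (fun x => φ n (f x)) := by
      funext x; simp [Finset.sum_range_succ]
    have m1 : (fun x => ∑ k ∈ Finset.range n, φ k (f x)) ∈ Cf f :=
      ⟨fun t => ∑ k ∈ Finset.range n, φ k t,
        continuous_finset_sum _ fun k _ => hφc k, by simp [hφ0], rfl⟩
    have m2 : (fun x => φ n (f x)) ∈ Cf f := ⟨φ n, hφc n, hφ0 n, rfl⟩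
    rw [he, hadd f hf _ m1 _ m2, ih, Finset.sum_range_succ]

end Layer
section Key
variable {X : Type*} [TopologicalSpace X] [LocallyCompactSpace X] [T2Space X]
variable (ρ : (X → ℝ) → (X → ℝ) → ℝ)
variable (hadd : ∀ f : X → ℝ, IsCc f → ∀ g ∈ Cf f, ∀ h ∈ Cf f, ρ f (g + h) = ρ f g + ρ f h)
variable (hsmul : ∀ f : X → ℝ, IsCc f → ∀ (c : ℝ), ∀ g ∈ Cf f, ρ f (c • g) = c * ρ f g)
variable (hpos : ∀ f : X → ℝ, IsCc f → ∀ h ∈ Cf f, (∀ x, 0 ≤ h x) → 0 ≤ ρ f h)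
variable (hnorm : ∀ f : X → ℝ, IsCc f → ∀ h ∈ Cf f, |ρ f h| ≤ unif h)
variable (hcoh : ∀ f : X → ℝ, IsCc f → ∀ g ∈ Cf f, ∀ h ∈ Cf g, ρ f h = ρ g h)

include hadd hsmul hpos hnorm hcoh

/-- Splitting into positive and negative parts. -/
lemma rho_split {f : X → ℝ} (hf : IsCc f) :
    ρ f f = ρ (fun x => max (f x) 0) (fun x => max (f x) 0)
      - ρ (fun x => max (-f x) 0) (fun x => max (-f x) 0) := by
  have mF : (fun x => max (f x) 0) ∈ Cf f := ⟨fun t => max t 0, by fun_prop, by simp, rfl⟩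
  have mF' : (fun x => max (-f x) 0) ∈ Cf f :=
    ⟨fun t => max (-t) 0, by fun_prop, by simp, rfl⟩
  have mmin : (fun x => min (f x) 0) ∈ Cf f := ⟨fun t => min t 0, by fun_prop, by simp, rfl⟩
  have h1 : ρ f ((fun x => max (f x) 0) + (fun x => min (f x) 0))
      = ρ f (fun x => max (f x) 0) + ρ f (fun x => min (f x) 0) :=
    hadd f hf _ mF _ mmin
  have he : (fun x => max (f x) 0) + (fun x => min (f x) 0) = f := by
    funext x
    show max (f x) 0 + min (f x) 0 = f x
    rw [max_add_min]; ring
  have h2 : (fun x => min (f x) 0) = (-1 : ℝ) • (fun x => max (-f x) 0) := by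
    funext x
    show min (f x) 0 = (-1 : ℝ) * max (-f x) 0
    rcases le_total (f x) 0 with h | h
    · rw [min_eq_left h, max_eq_left (by linarith)]; ring
    · rw [min_eq_right h, max_eq_right (by linarith)]; ring
  have h3 : ρ f ((-1 : ℝ) • (fun x => max (-f x) 0))
      = -1 * ρ f (fun x => max (-f x) 0) := hsmul f hf (-1) _ mF'
  rw [he, h2] at h1
  rw [h1, h3, rho_self ρ hadd hsmul hpos hnorm hcoh hf mF,
    rho_self ρ hadd hsmul hpos hnorm hcoh hf mF']
  ring

/-- One-sided Lipschitz estimate. -/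
lemma key_onesided {f g : X → ℝ} (hf : IsCc f) (hg : IsCc g) :
    ρ f f - ρ g g ≤ unif (f - g) := by
  classical
  set ε : ℝ := unif (f - g) with hε_def
  have hε0 : 0 ≤ ε := unif_nonneg _
  have hCfg : IsCc (f - g) := by
    constructor
    · exact hf.1.sub hg.1
    · have hneg : HasCompactSupport ((fun t : ℝ => -t) ∘ g) := hg.2.comp_left neg_zero
      have he : f - g = f + ((fun t : ℝ => -t) ∘ g) := by
        funext x; simp [sub_eq_add_neg]
      rw [he]; exact hf.2.add hneg
  have hpt : ∀ x, |f x - g x| ≤ ε := fun x => by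
    have := abs_le_unif hCfg x
    simpa using this
  -- it suffices to prove the estimate with slack 3δ for every δ > 0
  have main : ∀ δ : ℝ, 0 < δ → ρ f f - ρ g g ≤ ε + 3 * δ := by
    intro δ hδ
    set m : ℕ := ⌈ε / δ⌉₊ + 1 with hm_def
    have hmcast : (m : ℝ) = (⌈ε / δ⌉₊ : ℝ) + 1 := by rw [hm_def]; push_cast; ring
    have hceil : ε ≤ (⌈ε / δ⌉₊ : ℝ) * δ := by
      rw [← div_le_iff₀ hδ]; exact Nat.le_ceil (ε / δ)
    have hm1 : ε + δ ≤ (m : ℝ) * δ := by rw [hmcast]; nlinarith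
    have hm2 : (m : ℝ) * δ ≤ ε + 2 * δ := by
      have h := Nat.ceil_lt_add_one (by positivity : (0:ℝ) ≤ ε / δ)
      have h' : (⌈ε / δ⌉₊ : ℝ) * δ < ε + δ := by
        have h2 := mul_lt_mul_of_pos_right h hδ
        calc (⌈ε / δ⌉₊ : ℝ) * δ < (ε / δ + 1) * δ := h2
          _ = ε + δ := by field_simp
      rw [hmcast]; nlinarith
    obtain ⟨Bf, hBf0, hBf⟩ := cc_bound hf
    obtain ⟨Bg, hBg0, hBg⟩ := cc_bound hg
    set B : ℝ := max Bf Bg with hB_def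
    have hB0 : 0 ≤ B := le_trans hBf0 (le_max_left _ _)
    set n : ℕ := ⌈B / δ⌉₊ with hn_def
    have hn : B ≤ (n : ℝ) * δ := by
      rw [← div_le_iff₀ hδ]; exact Nat.le_ceil (B / δ)
    -- the four nonnegative parts
    set F : X → ℝ := fun x => max (f x) 0 with hF_def
    set F' : X → ℝ := fun x => max (-f x) 0 with hF'_def
    set G : X → ℝ := fun x => max (g x) 0 with hG_def
    set G' : X → ℝ := fun x => max (-g x) 0 with hG'_def
    have hF : IsCc F := isCc_comp hf (φ := fun t => max t 0) (by fun_prop) (by simp)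
    have hF' : IsCc F' := isCc_comp hf (φ := fun t => max (-t) 0) (by fun_prop) (by simp)
    have hG : IsCc G := isCc_comp hg (φ := fun t => max t 0) (by fun_prop) (by simp)
    have hG' : IsCc G' := isCc_comp hg (φ := fun t => max (-t) 0) (by fun_prop) (by simp)
    have hF0 : ∀ x, 0 ≤ F x := fun x => le_max_right _ _
    have hF'0 : ∀ x, 0 ≤ F' x := fun x => le_max_right _ _
    have hG0 : ∀ x, 0 ≤ G x := fun x => le_max_right _ _
    have hG'0 : ∀ x, 0 ≤ G' x := fun x => le_max_right _ _
    have hnd : 0 ≤ (n : ℝ) * δ := by positivity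
    have hFB : ∀ x, F x ≤ (n : ℝ) * δ := fun x =>
      max_le ((le_abs_self _).trans ((hBf x).trans ((le_max_left _ _).trans hn))) hnd
    have hF'B : ∀ x, F' x ≤ (n : ℝ) * δ := fun x =>
      max_le ((neg_le_abs _).trans ((hBf x).trans ((le_max_left _ _).trans hn))) hnd
    have hGB : ∀ x, G x ≤ (n : ℝ) * δ := fun x =>
      max_le ((le_abs_self _).trans ((hBg x).trans ((le_max_right _ _).trans hn))) hnd
    have hG'B : ∀ x, G' x ≤ (n : ℝ) * δ := fun x =>
      max_le ((neg_le_abs _).trans ((hBg x).trans ((le_max_right _ _).trans hn))) hnd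
    -- layer functions
    set ψ : ℕ → ℝ → ℝ := fun k t => min δ (max (t - k * δ) 0) with hψ_def
    have hψc : ∀ k, Continuous (ψ k) := fun k => by
      show Continuous fun t => min δ (max (t - k * δ) 0); fun_prop
    have hψ0 : ∀ k, ψ k 0 = 0 := fun k => by
      show min δ (max (0 - k * δ) 0) = 0
      have hkd : (0:ℝ) ≤ (k:ℝ) * δ := by positivity
      rw [max_eq_right (by linarith), min_eq_right hδ.le]
    have hψlb : ∀ k t, 0 ≤ ψ k t := fun k t => le_min hδ.le (le_max_right _ _)
    have hψub : ∀ k t, ψ k t ≤ δ := fun k t => min_le_left _ _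
    have hψfull : ∀ (k : ℕ) (t : ℝ), ((k : ℝ) + 1) * δ ≤ t → ψ k t = δ := by
      intro k t ht
      show min δ (max (t - k * δ) 0) = δ
      rw [max_eq_left (by nlinarith), min_eq_left (by nlinarith)]
    have hψpos : ∀ (k : ℕ) (t : ℝ), 0 < ψ k t → (k : ℝ) * δ < t := by
      intro k t ht
      by_contra hcon
      push_neg at hcon
      have h0 : ψ k t = 0 := by
        show min δ (max (t - k * δ) 0) = 0
        rw [max_eq_right (by linarith), min_eq_right hδ.le]
      rw [h0] at ht; exact lt_irrefl 0 ht
    -- decomposition of each part as the sum of its layers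
    have dec : ∀ (H : X → ℝ), IsCc H → (∀ x, 0 ≤ H x) → (∀ x, H x ≤ (n : ℝ) * δ) →
        ρ H H = ∑ k ∈ Finset.range (m + n), ρ (fun x => ψ k (H x)) (fun x => ψ k (H x)) := by
      intro H hH hH0 hHB
      have hs := rho_sum ρ hadd hsmul hH ψ hψc hψ0 (m + n)
      have heq : (fun x => ∑ k ∈ Finset.range (m + n), ψ k (H x)) = H := by
        funext x
        have hls : ∑ k ∈ Finset.range (m + n), min δ (max (H x - k * δ) 0)
            = min (H x) ((m + n : ℕ) * δ) := layer_sum hδ (m + n) (hH0 x)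
        show ∑ k ∈ Finset.range (m + n), ψ k (H x) = H x
        calc ∑ k ∈ Finset.range (m + n), ψ k (H x)
            = min (H x) ((m + n : ℕ) * δ) := hls
          _ = H x := by
              apply min_eq_left
              have hc : (n : ℝ) * δ ≤ ((m + n : ℕ) : ℝ) * δ := by
                push_cast
                have hmd : (0:ℝ) ≤ (m : ℝ) * δ := by positivity
                nlinarith
              exact (hHB x).trans hc
      rw [heq] at hs
      rw [hs]
      exact Finset.sum_congr rfl fun k _ =>
        rho_self ρ hadd hsmul hpos hnorm hcoh hH ⟨ψ k, hψc k, hψ0 k, rfl⟩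
    have dF := dec F hF hF0 hFB
    have dF' := dec F' hF' hF'0 hF'B
    have dG := dec G hG hG0 hGB
    have dG' := dec G' hG' hG'0 hG'B
    -- nonnegativity and δ-bound for individual layer terms
    have Epos : ∀ (H : X → ℝ), IsCc H → ∀ k : ℕ,
        0 ≤ ρ (fun x => ψ k (H x)) (fun x => ψ k (H x)) := by
      intro H hH k
      have hu : IsCc (fun x => ψ k (H x)) := isCc_comp hH (hψc k) (hψ0 k)
      exact hpos _ hu _ (self_mem_Cf _) fun x => hψlb _ _
    have Ebound : ∀ (H : X → ℝ), IsCc H → ∀ k : ℕ,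
        ρ (fun x => ψ k (H x)) (fun x => ψ k (H x)) ≤ δ := by
      intro H hH k
      have hu : IsCc (fun x => ψ k (H x)) := isCc_comp hH (hψc k) (hψ0 k)
      have h1 := hnorm _ hu _ (self_mem_Cf (fun x => ψ k (H x)))
      have h2 : unif (fun x => ψ k (H x)) ≤ δ :=
        unif_le hδ.le fun x => by
          rw [abs_of_nonneg (hψlb _ _)]; exact hψub _ _
      exact (le_abs_self _).trans (h1.trans h2)
    -- comparison of shifted layers, positive side
    have cmpPos : ∀ i : ℕ, ρ (fun x => ψ (m + i) (F x)) (fun x => ψ (m + i) (F x))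
        ≤ ρ (fun x => ψ i (G x)) (fun x => ψ i (G x)) := by
      intro i
      refine lemA ρ hadd hsmul hpos hnorm hcoh (isCc_comp hF (hψc _) (hψ0 _))
        (isCc_comp hG (hψc _) (hψ0 _)) hδ (fun x => hψlb _ _) (fun x => hψub _ _)
        (fun x => hψlb _ _) (fun x => hψub _ _) ?_
      intro x hx
      have h1 : ((m + i : ℕ) : ℝ) * δ < F x := hψpos _ _ hx
      have h2 : (0:ℝ) ≤ ((m + i : ℕ) : ℝ) * δ := by positivity
      have hFf : F x = f x := by
        rcases le_total (f x) 0 with h | h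
        · exfalso
          have hz : F x = 0 := max_eq_right h
          rw [hz] at h1; linarith
        · exact max_eq_left h
      rw [hFf] at h1
      push_cast at h1
      have hfg1 : f x - g x ≤ ε := (abs_le.mp (hpt x)).2
      apply hψfull
      have : ((i : ℝ) + 1) * δ ≤ g x := by nlinarith
      exact this.trans (le_max_left _ _)
    -- comparison of shifted layers, negative side
    have cmpNeg : ∀ i : ℕ, ρ (fun x => ψ (m + i) (G' x)) (fun x => ψ (m + i) (G' x))
        ≤ ρ (fun x => ψ i (F' x)) (fun x => ψ i (F' x)) := by
      intro i
      refine lemA ρ hadd hsmul hpos hnorm hcoh (isCc_comp hG' (hψc _) (hψ0 _))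
        (isCc_comp hF' (hψc _) (hψ0 _)) hδ (fun x => hψlb _ _) (fun x => hψub _ _)
        (fun x => hψlb _ _) (fun x => hψub _ _) ?_
      intro x hx
      have h1 : ((m + i : ℕ) : ℝ) * δ < G' x := hψpos _ _ hx
      have h2 : (0:ℝ) ≤ ((m + i : ℕ) : ℝ) * δ := by positivity
      have hGg : G' x = -g x := by
        rcases le_total (-g x) 0 with h | h
        · exfalso
          have hz : G' x = 0 := max_eq_right h
          rw [hz] at h1; linarith
        · exact max_eq_left h
      rw [hGg] at h1
      push_cast at h1
      have hfg2 : f x - g x ≤ ε := (abs_le.mp (hpt x)).2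
      apply hψfull
      have : ((i : ℝ) + 1) * δ ≤ -f x := by nlinarith
      exact this.trans (le_max_left _ _)
    -- disjoint-support pairing of the small layers
    have cmpB : ∀ k : ℕ, k < m →
        ρ (fun x => ψ k (F x)) (fun x => ψ k (F x))
          + ρ (fun x => ψ (m - k) (G' x)) (fun x => ψ (m - k) (G' x)) ≤ δ := by
      intro k hk
      refine lemB ρ hadd hsmul hpos hnorm hcoh (isCc_comp hF (hψc _) (hψ0 _))
        (isCc_comp hG' (hψc _) (hψ0 _)) hδ (fun x => hψlb _ _) (fun x => hψub _ _)
        (fun x => hψlb _ _) (fun x => hψub _ _) ?_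
      have hs1 : tsupport (fun x => ψ k (F x)) ⊆ {x | (k : ℝ) * δ ≤ f x} := by
        apply closure_minimal
        · intro x hx
          have hx' : 0 < ψ k (F x) := lt_of_le_of_ne (hψlb _ _) (Ne.symm hx)
          have h1 : (k : ℝ) * δ < F x := hψpos _ _ hx'
          have h2 : (0:ℝ) ≤ (k : ℝ) * δ := by positivity
          have hFf : F x = f x := by
            rcases le_total (f x) 0 with h | h
            · exfalso
              have hz : F x = 0 := max_eq_right h
              rw [hz] at h1; linarith
            · exact max_eq_left h
          rw [hFf] at h1
          exact le_of_lt h1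
        · exact isClosed_le continuous_const hf.1
      have hs2 : tsupport (fun x => ψ (m - k) (G' x))
          ⊆ {x | g x ≤ -(((m - k : ℕ) : ℝ) * δ)} := by
        apply closure_minimal
        · intro x hx
          have hx' : 0 < ψ (m - k) (G' x) := lt_of_le_of_ne (hψlb _ _) (Ne.symm hx)
          have h1 : ((m - k : ℕ) : ℝ) * δ < G' x := hψpos _ _ hx'
          have h2 : (0:ℝ) ≤ ((m - k : ℕ) : ℝ) * δ := by positivity
          have hGg : G' x = -g x := by
            rcases le_total (-g x) 0 with h | h
            · exfalso
              have hz : G' x = 0 := max_eq_right h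
              rw [hz] at h1; linarith
            · exact max_eq_left h
          rw [hGg] at h1
          show g x ≤ -(((m - k : ℕ) : ℝ) * δ)
          linarith
        · exact isClosed_le hg.1 continuous_const
      refine Set.disjoint_of_subset hs1 hs2 ?_
      rw [Set.disjoint_left]
      intro x hx1 hx2
      have hc : ((m - k : ℕ) : ℝ) = (m : ℝ) - (k : ℝ) := by
        rw [Nat.cast_sub hk.le]
      have e1 : (k : ℝ) * δ ≤ f x := hx1
      have e2 : g x ≤ -(((m - k : ℕ) : ℝ) * δ) := hx2
      rw [hc] at e2
      have hfg1 : f x - g x ≤ ε := (abs_le.mp (hpt x)).2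
      nlinarith
    -- assembling the sums
    have sF : ρ F F - ρ G G ≤ ∑ k ∈ Finset.range m,
        ρ (fun x => ψ k (F x)) (fun x => ψ k (F x)) := by
      have e1 : ρ F F = (∑ k ∈ Finset.range m, ρ (fun x => ψ k (F x)) (fun x => ψ k (F x)))
          + ∑ i ∈ Finset.range n, ρ (fun x => ψ (m + i) (F x)) (fun x => ψ (m + i) (F x)) := by
        rw [dF, Finset.sum_range_add]
      have e2 : ∑ i ∈ Finset.range n, ρ (fun x => ψ (m + i) (F x)) (fun x => ψ (m + i) (F x))
          ≤ ∑ i ∈ Finset.range n, ρ (fun x => ψ i (G x)) (fun x => ψ i (G x)) :=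
        Finset.sum_le_sum fun i _ => cmpPos i
      have e3 : ∑ i ∈ Finset.range n, ρ (fun x => ψ i (G x)) (fun x => ψ i (G x)) ≤ ρ G G := by
        rw [dG, show m + n = n + m from Nat.add_comm m n, Finset.sum_range_add]
        have : 0 ≤ ∑ i ∈ Finset.range m,
            ρ (fun x => ψ (n + i) (G x)) (fun x => ψ (n + i) (G x)) :=
          Finset.sum_nonneg fun i _ => Epos G hG (n + i)
        linarith
      linarith
    have sG' : ρ G' G' - ρ F' F' ≤ ∑ k ∈ Finset.range m,
        ρ (fun x => ψ k (G' x)) (fun x => ψ k (G' x)) := by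
      have e1 : ρ G' G' = (∑ k ∈ Finset.range m, ρ (fun x => ψ k (G' x)) (fun x => ψ k (G' x)))
          + ∑ i ∈ Finset.range n, ρ (fun x => ψ (m + i) (G' x)) (fun x => ψ (m + i) (G' x)) := by
        rw [dG', Finset.sum_range_add]
      have e2 : ∑ i ∈ Finset.range n, ρ (fun x => ψ (m + i) (G' x)) (fun x => ψ (m + i) (G' x))
          ≤ ∑ i ∈ Finset.range n, ρ (fun x => ψ i (F' x)) (fun x => ψ i (F' x)) :=
        Finset.sum_le_sum fun i _ => cmpNeg i
      have e3 : ∑ i ∈ Finset.range n, ρ (fun x => ψ i (F' x)) (fun x => ψ i (F' x))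
          ≤ ρ F' F' := by
        rw [dF', show m + n = n + m from Nat.add_comm m n, Finset.sum_range_add]
        have : 0 ≤ ∑ i ∈ Finset.range m,
            ρ (fun x => ψ (n + i) (F' x)) (fun x => ψ (n + i) (F' x)) :=
          Finset.sum_nonneg fun i _ => Epos F' hF' (n + i)
        linarith
      linarith
    -- reflect the second sum
    set C : ℕ → ℝ := fun k => ρ (fun x => ψ k (G' x)) (fun x => ψ k (G' x)) with hC_def
    have reflect : ∑ k ∈ Finset.range m, C k ≤ (∑ k ∈ Finset.range m, C (m - k)) + δ := by
      have e1 : ∑ k ∈ Finset.range m, C (m - k) = ∑ k ∈ Finset.range m, C (k + 1) := by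
        rw [← Finset.sum_range_reflect (fun j => C (j + 1)) m]
        refine Finset.sum_congr rfl fun j hj => ?_
        have hjm : j < m := Finset.mem_range.mp hj
        congr 1
        omega
      have e2 : ∑ k ∈ Finset.range (m + 1), C k
          = (∑ k ∈ Finset.range m, C (k + 1)) + C 0 := Finset.sum_range_succ' C m
      have e3 : ∑ k ∈ Finset.range (m + 1), C k
          = (∑ k ∈ Finset.range m, C k) + C m := Finset.sum_range_succ C m
      have hC0 : C 0 ≤ δ := Ebound G' hG' 0
      have hCm : 0 ≤ C m := Epos G' hG' m
      linarith
    have pairs : (∑ k ∈ Finset.range m,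
        ρ (fun x => ψ k (F x)) (fun x => ψ k (F x))) + ∑ k ∈ Finset.range m, C (m - k)
          ≤ (m : ℝ) * δ := by
      rw [← Finset.sum_add_distrib]
      calc ∑ k ∈ Finset.range m,
            (ρ (fun x => ψ k (F x)) (fun x => ψ k (F x)) + C (m - k))
          ≤ ∑ _k ∈ Finset.range m, δ :=
            Finset.sum_le_sum fun k hk => cmpB k (Finset.mem_range.mp hk)
        _ = (m : ℝ) * δ := by
            rw [Finset.sum_const, Finset.card_range, nsmul_eq_mul]
    have split_f := rho_split ρ hadd hsmul hpos hnorm hcoh hf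
    have split_g := rho_split ρ hadd hsmul hpos hnorm hcoh hg
    have final : ρ f f - ρ g g ≤ (m : ℝ) * δ + δ := by
      rw [split_f, split_g]
      have : ρ F F - ρ F' F' - (ρ G G - ρ G' G')
          = (ρ F F - ρ G G) + (ρ G' G' - ρ F' F') := by ring
      calc ρ F F - ρ F' F' - (ρ G G - ρ G' G')
          = (ρ F F - ρ G G) + (ρ G' G' - ρ F' F') := by ring
        _ ≤ (∑ k ∈ Finset.range m, ρ (fun x => ψ k (F x)) (fun x => ψ k (F x)))
            + ∑ k ∈ Finset.range m, C k := add_le_add sF sG'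
        _ ≤ (∑ k ∈ Finset.range m, ρ (fun x => ψ k (F x)) (fun x => ψ k (F x)))
            + ((∑ k ∈ Finset.range m, C (m - k)) + δ) := by linarith
        _ ≤ (m : ℝ) * δ + δ := by linarith
    linarith
  by_contra hcon
  push_neg at hcon
  have hd : 0 < (ρ f f - ρ g g - ε) / 4 := by linarith
  have := main _ hd
  linarith
end Key

/-- Given a coherent family `(ρ_f)_{f ∈ C_c(X)}` of positive linear functionals
`ρ_f : C(f) → ℝ` of norm at most `1`, the functional `η(f) = ρ_f(f)` is a `1`-Lipschitz
quasi-integral on `X` whose restriction to each `C(f)` is `ρ_f`, and it is the unique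
quasi-integral with this property. -/
theorem coherent_family_yields_quasiIntegral
    {X : Type*} [TopologicalSpace X] [LocallyCompactSpace X] [T2Space X]
    (ρ : (X → ℝ) → (X → ℝ) → ℝ)
    (hadd : ∀ f : X → ℝ, IsCc f → ∀ g ∈ Cf f, ∀ h ∈ Cf f, ρ f (g + h) = ρ f g + ρ f h)
    (hsmul : ∀ f : X → ℝ, IsCc f → ∀ (c : ℝ), ∀ g ∈ Cf f, ρ f (c • g) = c * ρ f g)
    (hpos : ∀ f : X → ℝ, IsCc f → ∀ h ∈ Cf f, (∀ x, 0 ≤ h x) → 0 ≤ ρ f h)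
    (hnorm : ∀ f : X → ℝ, IsCc f → ∀ h ∈ Cf f, |ρ f h| ≤ unif h)
    (hcoh : ∀ f : X → ℝ, IsCc f → ∀ g ∈ Cf f, ∀ h ∈ Cf g, ρ f h = ρ g h) :
    IsQuasiIntegral (fun f : X → ℝ => ρ f f) ∧
    (∀ f g : X → ℝ, IsCc f → IsCc g → |ρ f f - ρ g g| ≤ unif (f - g)) ∧
    (∀ f : X → ℝ, IsCc f → ∀ h ∈ Cf f, ρ h h = ρ f h) ∧
    (∀ η' : (X → ℝ) → ℝ, IsQuasiIntegral η' →
      (∀ f : X → ℝ, IsCc f → ∀ h ∈ Cf f, η' h = ρ f h) →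
      ∀ f : X → ℝ, IsCc f → η' f = ρ f f) := by
  refine ⟨⟨fun f hf h0 => hpos f hf f (self_mem_Cf f) h0, fun f hf => ⟨?_, ?_⟩⟩, ?_, ?_, ?_⟩
  · -- additivity on C(f)
    intro g hg h hh
    obtain ⟨φ, hφc, hφ0, hφe⟩ := hg
    obtain ⟨χ, hχc, hχ0, hχe⟩ := hh
    have hm : g + h ∈ Cf f := by
      refine ⟨fun t => φ t + χ t, by fun_prop, by simp [hφ0, hχ0], funext fun x => ?_⟩
      show g x + h x = φ (f x) + χ (f x)
      rw [congrFun hφe x, congrFun hχe x]; rfl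
    show ρ (g + h) (g + h) = ρ g g + ρ h h
    calc ρ (g + h) (g + h) = ρ f (g + h) :=
          (rho_self ρ hadd hsmul hpos hnorm hcoh hf hm).symm
      _ = ρ f g + ρ f h := hadd f hf g ⟨φ, hφc, hφ0, hφe⟩ h ⟨χ, hχc, hχ0, hχe⟩
      _ = ρ g g + ρ h h := by
          rw [rho_self ρ hadd hsmul hpos hnorm hcoh hf ⟨φ, hφc, hφ0, hφe⟩,
            rho_self ρ hadd hsmul hpos hnorm hcoh hf ⟨χ, hχc, hχ0, hχe⟩]
  · -- homogeneity on C(f)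
    intro c g hg
    obtain ⟨φ, hφc, hφ0, hφe⟩ := hg
    have hm : c • g ∈ Cf f := by
      refine ⟨fun t => c * φ t, by fun_prop, by simp [hφ0], funext fun x => ?_⟩
      show c * g x = c * φ (f x)
      rw [congrFun hφe x]; rfl
    show ρ (c • g) (c • g) = c * ρ g g
    calc ρ (c • g) (c • g) = ρ f (c • g) :=
          (rho_self ρ hadd hsmul hpos hnorm hcoh hf hm).symm
      _ = c * ρ f g := hsmul f hf c g ⟨φ, hφc, hφ0, hφe⟩
      _ = c * ρ g g := by
          rw [rho_self ρ hadd hsmul hpos hnorm hcoh hf ⟨φ, hφc, hφ0, hφe⟩]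
  · -- 1-Lipschitz
    intro f g hf hg
    have h1 := key_onesided ρ hadd hsmul hpos hnorm hcoh hf hg
    have h2 := key_onesided ρ hadd hsmul hpos hnorm hcoh hg hf
    have hsym : unif (g - f) = unif (f - g) := by
      show (⨆ x, |(g - f) x|) = ⨆ x, |(f - g) x|
      exact iSup_congr fun x => by
        simp only [Pi.sub_apply]; rw [abs_sub_comm]
    rw [hsym] at h2
    exact abs_le.mpr ⟨by linarith, h1⟩
  · -- restriction property
    intro f hf h hh
    exact (rho_self ρ hadd hsmul hpos hnorm hcoh hf hh).symm
  · -- uniqueness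
    intro η' _ hrest f hf
    exact hrest f hf f (self_mem_Cf f)
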